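/- arXiv:0803.3702 — 8 statements merged into one kernel-verified Lean document; each statement's English description precedes it below -/
import Mathlib

section
/- For every natural number r, the r-th addition structure polynomial of p-typical Witt vectors — i.e. the integral polynomial S_r in the variables T_0,…,T_r,U_0,…,U_r such that for any commutative ring A and any Witt vectors a, b ∈ 𝕎(A) one has (a+b)_r = S_r(a_0,…,a_r,b_0,…,b_r) — is isobaric of weight p^r, where the variable T_i and the variable U_i are each assigned weight p^i (that is, every monomial occurring in S_r has total weight p^r for this weighting). -/
/-!
The structure polynomials `S_n` of a homogeneous polynomial `Φ` of degree `d` are characterised by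
`∑_{i ≤ n} p^i S_i^{p^{n-i}} = Φ(W_n(X_0), W_n(X_1), …)`, where the Witt polynomial `W_n` is
isobaric of weight `p^n`. So the right-hand side is isobaric of weight `d p^n`, and by induction so
is every term `p^i S_i^{p^{n-i}}` with `i < n`; hence so is `p^n S_n`, and since `ℤ` is
torsion-free, `S_n` itself. Addition is the case `Φ = X_0 + X_1`, `d = 1`.
-/

open MvPolynomial Finset

theorem Finsupp.weight_mapDomain {σ τ M : Type*} [AddCommMonoid M] (w : τ → M) (f : σ → τ)
    (u : σ →₀ ℕ) : weight w (u.mapDomain f) = weight (w ∘ f) u := by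
  induction u using Finsupp.induction with
  | zero => simp
  | single_add a b u _ _ ih =>
    simp [Finsupp.mapDomain_add, ih, Finsupp.mapDomain_single, weight_single]

namespace MvPolynomial

variable {R σ τ M : Type*} [AddCommMonoid M]

theorem IsWeightedHomogeneous.rename [CommSemiring R] {w : τ → M} {φ : MvPolynomial σ R} {m : M}
    (f : σ → τ) (h : φ.IsWeightedHomogeneous (w ∘ f) m) :
    (rename f φ).IsWeightedHomogeneous w m := by
  intro d hd
  obtain ⟨u, rfl, hu⟩ := coeff_rename_ne_zero f φ d hd
  rw [Finsupp.weight_mapDomain]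
  exact h hu

theorem IsWeightedHomogeneous.of_C_mul [CommSemiring R] [NoZeroDivisors R] {w : σ → M}
    {φ : MvPolynomial σ R} {m : M} {c : R} (hc : c ≠ 0)
    (h : (C c * φ).IsWeightedHomogeneous w m) : φ.IsWeightedHomogeneous w m := by
  intro d hd
  apply h
  rw [coeff_C_mul]
  exact mul_ne_zero hc hd

theorem IsHomogeneous.aeval_isWeightedHomogeneous [CommSemiring R] {φ : MvPolynomial σ R}
    {d : ℕ} (hφ : φ.IsHomogeneous d) {w : τ → M} {m : M} {g : σ → MvPolynomial τ R}
    (hg : ∀ i, (g i).IsWeightedHomogeneous w m) :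
    (MvPolynomial.aeval g φ).IsWeightedHomogeneous w (d • m) := by
  rw [φ.as_sum, map_sum]
  refine IsWeightedHomogeneous.sum _ _ _ fun e he => ?_
  rw [aeval_monomial, algebraMap_eq]
  refine IsWeightedHomogeneous.C_mul ?_ _
  have hdeg : ∑ i ∈ e.support, e i = d := by
    rw [← hφ (mem_support_iff.mp he), Pi.one_def, ← Finsupp.degree_eq_weight_one]
    rfl
  rw [← hdeg, Finset.sum_smul]
  exact IsWeightedHomogeneous.prod _ _ _ fun i _ => (hg i).pow (e i)

end MvPolynomial

section Witt

variable (p : ℕ)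

theorem isWeightedHomogeneous_wittPolynomial (R : Type*) [CommRing R] (n : ℕ) :
    (wittPolynomial p R n).IsWeightedHomogeneous (p ^ ·) (p ^ n) := by
  refine IsWeightedHomogeneous.sum _ _ _ fun i hi => isWeightedHomogeneous_monomial _ _ _ ?_
  rw [Finsupp.weight_single, smul_eq_mul, ← pow_add,
    Nat.sub_add_cancel (Nat.lt_succ_iff.mp (mem_range.mp hi))]

variable [Fact p.Prime] {idx : Type*}

theorem wittStructureInt_isWeightedHomogeneous {Φ : MvPolynomial idx ℤ} {d : ℕ}
    (hΦ : Φ.IsHomogeneous d) (n : ℕ) :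
    (wittStructureInt p Φ n).IsWeightedHomogeneous (fun v : idx × ℕ => p ^ v.2) (d * p ^ n) := by
  induction n using Nat.strong_induction_on with
  | _ n ih =>
  have hC : ∀ k, (p : MvPolynomial (idx × ℕ) ℤ) ^ k = C ((p : ℤ) ^ k) := by simp
  have hrhs := hΦ.aeval_isWeightedHomogeneous fun i =>
    (isWeightedHomogeneous_wittPolynomial p ℤ n).rename (w := fun v : idx × ℕ => p ^ v.2)
      (Prod.mk i)
  rw [smul_eq_mul] at hrhs
  have hlower : (∑ i ∈ range n, (p : MvPolynomial (idx × ℕ) ℤ) ^ i *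
      wittStructureInt p Φ i ^ p ^ (n - i)).IsWeightedHomogeneous (fun v => p ^ v.2)
        (d * p ^ n) := by
    refine IsWeightedHomogeneous.sum _ _ _ fun i hi => ?_
    have hpow : d * p ^ n = p ^ (n - i) • (d * p ^ i) := by
      rw [smul_eq_mul, mul_left_comm, ← pow_add, Nat.sub_add_cancel (mem_range.mp hi).le]
    rw [hC, hpow]
    exact ((ih i (mem_range.mp hi)).pow _).C_mul _
  have key := wittStructureInt_prop p Φ n
  rw [bind₁, aeval_wittPolynomial, sum_range_succ, Nat.sub_self, pow_zero, pow_one,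
    ← eq_sub_iff_add_eq', hC] at key
  refine IsWeightedHomogeneous.of_C_mul (pow_ne_zero n (Nat.cast_ne_zero.mpr
    (Fact.out : p.Prime).ne_zero)) ?_
  rw [key]
  exact hrhs.sub hlower

end Witt

/-- For every natural number `r`, the `r`-th addition structure polynomial of
`p`-typical Witt vectors (the integral polynomial `S_r = wittAdd p r` in the variables
`T_0, …, T_r, U_0, …, U_r` such that for any commutative ring `A` and Witt vectors `a, b`
one has `(a + b)_r = S_r(a_0, …, a_r, b_0, …, b_r)`) is isobaric of weight `p ^ r`,
where the variable indexed by `(i, k)` has weight `p ^ k`. -/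
theorem stmt_0 (p : ℕ) [Fact p.Prime] (r : ℕ) :
    (∀ (A : Type) [CommRing A] (a b : WittVector p A),
        (a + b).coeff r = WittVector.peval (WittVector.wittAdd p r) ![a.coeff, b.coeff]) ∧
      (WittVector.wittAdd p r).IsWeightedHomogeneous
        (fun v : Fin 2 × ℕ => p ^ v.2) (p ^ r) := by
  refine ⟨fun A _ a b => WittVector.add_coeff a b r, ?_⟩
  have h := wittStructureInt_isWeightedHomogeneous p
    ((isHomogeneous_X ℤ (0 : Fin 2)).add (isHomogeneous_X ℤ 1)) r
  rwa [one_mul] at h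
end

section
/- Let μ, λ ∈ R be nonzero elements of the maximal ideal, set A := R/λR, and let μ̄ ∈ A denote the image of μ. Let a_1, …, a_{p−1} ∈ A, and adopt the conventions a_0 = 1 and a_i = 0 for i ≥ p. Then the following three statements are equivalent: (i) r! · a_r = ∏_{k=0}^{r−1}(a_1 − k·μ̄) for every 1 ≤ r ≤ p−1, and ∏_{k=0}^{p−1}(a_1 − k·μ̄) = 0; (ii) a_{r−1}·a_1 = (r−1)·μ̄·a_{r−1} + r·a_r for every 1 ≤ r ≤ p; (iii) a_r·a_l = Σ_{max(r,l) ≤ i ≤ r+l} [i!/((r+l−i)!·(i−l)!·(i−r)!)] · μ̄^{r+l−i} · a_i for all 1 ≤ r, l ≤ p−1 (the coefficient i!/((r+l−i)!(i−l)!(i−r)!) being a nonnegative integer). -/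
/-!
Write `P n = ∏_{k<n} (a₁ - k μ̄)`. Given `a₀ = 1` and `aᵢ = 0` for `i ≥ p`, condition (i) says
exactly that `n! aₙ = P n` for every `n` (for `n ≥ p` both sides vanish), and (ii) is the recursion
`P (n+1) = P n · (a₁ - n μ̄)` divided by `n!`, which is a unit for `n < p`. Multiplying (iii) by
the unit `r! l!` turns it into the linearization formula
`P r · P l = ∑_k C(l,k) r(r-1)⋯(r-k+1) μ̄ᵏ P (r+l-k)`, and (ii) is the case `l = 1` of (iii).
-/

open Finset Nat

section FallingProd

variable {A : Type*} [CommRing A] (x m : A)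

def fallingProd (n : ℕ) : A := ∏ k ∈ range n, (x - k * m)

@[simp]
theorem fallingProd_zero : fallingProd x m 0 = 1 := prod_range_zero _

theorem fallingProd_succ (n : ℕ) :
    fallingProd x m (n + 1) = fallingProd x m n * (x - n * m) :=
  prod_range_succ _ n

theorem fallingProd_mul_sub (n j : ℕ) :
    fallingProd x m n * (x - j * m) =
      fallingProd x m (n + 1) + ((n : A) - j) * m * fallingProd x m n := by
  rw [fallingProd_succ]; ring

theorem fallingProd_eq_zero_of_le {p n : ℕ} (h : fallingProd x m p = 0) (hpn : p ≤ n) :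
    fallingProd x m n = 0 := by
  rw [fallingProd, ← prod_range_mul_prod_Ico _ hpn]
  exact mul_eq_zero_of_left h _

theorem Nat.cast_descFactorial_succ (r k : ℕ) :
    (r.descFactorial (k + 1) : A) = r.descFactorial k * ((r : A) - k) := by
  rcases le_or_gt k r with hkr | hrk
  · rw [descFactorial_succ, cast_mul, cast_sub hkr, mul_comm]
  · simp [descFactorial_eq_zero_iff_lt.2 hrk]

theorem fallingProd_mul_fallingProd (r l : ℕ) :
    fallingProd x m r * fallingProd x m l =
      ∑ k ∈ range (l + 1),
        (l.choose k * r.descFactorial k : A) * m ^ k * fallingProd x m (r + l - k) := by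
  induction l with
  | zero => simp
  | succ l ih =>
    have hstep : ∀ k ∈ range (l + 1),
        (l.choose k * r.descFactorial k : A) * m ^ k * fallingProd x m (r + l - k) * (x - l * m) =
          (l.choose k * r.descFactorial k : A) * m ^ k * fallingProd x m (r + (l + 1) - k) +
          (l.choose k * r.descFactorial (k + 1) : A) * m ^ (k + 1) *
            fallingProd x m (r + (l + 1) - (k + 1)) := by
      intro k hk
      have hkl : k ≤ l := Nat.lt_succ_iff.1 (mem_range.1 hk)
      rw [mul_assoc _ (fallingProd x m _), fallingProd_mul_sub, Nat.cast_descFactorial_succ,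
        show r + (l + 1) - k = r + l - k + 1 by omega,
        show r + (l + 1) - (k + 1) = r + l - k by omega,
        Nat.cast_sub (by omega), Nat.cast_add]
      ring
    have hlast : (l.choose (l + 1) * r.descFactorial (l + 1) : A) * m ^ (l + 1) *
        fallingProd x m (r + (l + 1) - (l + 1)) = 0 := by simp
    rw [fallingProd_succ, ← mul_assoc, ih, sum_mul, sum_congr rfl hstep, sum_add_distrib,
      ← add_zero (∑ k ∈ range (l + 1), _), ← hlast, ← sum_range_succ, sum_range_succ',
      sum_range_succ' _ (l + 1)]
    simp only [choose_succ_succ', cast_add, add_mul, sum_add_distrib, choose_zero_right]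
    ring

end FallingProd

theorem sum_range_succ_eq_sum_Icc_reflect {M : Type*} [AddCommMonoid M] (f : ℕ → M) {r : ℕ}
    (hf : ∀ k, r < k → f k = 0) (l : ℕ) :
    ∑ k ∈ range (l + 1), f k = ∑ i ∈ Icc (max r l) (r + l), f (r + l - i) := by
  rw [← sum_subset (range_subset_range.2 (succ_le_succ (min_le_right r l)))
    fun k hk hk' => hf k (by simp only [mem_range] at hk hk'; omega)]
  refine sum_nbij' (fun k => r + l - k) (fun i => r + l - i) ?_ ?_ ?_ ?_ ?_ <;> intro i hi <;>
    simp only [mem_range, mem_Icc] at hi ⊢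
  · omega
  · omega
  · omega
  · omega
  · rw [show r + l - (r + l - i) = i by omega]

theorem factorial_mul_factorial_mul_div {r l i : ℕ} (hri : r ≤ i) (hli : l ≤ i) (hi : i ≤ r + l) :
    r ! * l ! * (i ! / ((r + l - i)! * (i - l)! * (i - r)!)) =
      l.choose (r + l - i) * r.descFactorial (r + l - i) * i ! := by
  obtain ⟨k, hk, rfl⟩ : ∃ k, k ≤ r + l ∧ i = r + l - k := ⟨r + l - i, by omega, by omega⟩
  have hkr : k ≤ r := by omega
  have hkl : k ≤ l := by omega
  rw [show r + l - (r + l - k) = k by omega, show r + l - k - l = r - k by omega,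
    show r + l - k - r = l - k by omega]
  have hdvd : k ! * (r - k)! * (l - k)! ∣ (r + l - k)! := by
    have h1 := factorial_mul_factorial_dvd_factorial_add k (r - k)
    have h2 := factorial_mul_factorial_dvd_factorial_add r (l - k)
    rw [Nat.add_sub_cancel' hkr] at h1
    rw [show r + (l - k) = r + l - k by omega] at h2
    exact (mul_dvd_mul_right h1 _).trans h2
  rw [← factorial_mul_descFactorial hkr, ← choose_mul_factorial_mul_factorial hkl,
    ← Nat.mul_div_cancel' hdvd, Nat.mul_div_cancel_left _ (by positivity)]
  ring

theorem isUnit_natCast_factorial_of_lt {R : Type*} [CommRing R] [IsLocalRing R] {p n : ℕ}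
    (hp : p.Prime) [CharP (IsLocalRing.ResidueField R) p] (hn : n < p) : IsUnit (n ! : R) := by
  rw [← IsLocalRing.residue_ne_zero_iff_isUnit, map_natCast, Ne, CharP.cast_eq_zero_iff _ p,
    hp.dvd_factorial]
  omega

section Recursion

variable {A : Type*} [CommRing A] {p : ℕ} {m : A} {a : ℕ → A}

theorem factorial_mul_eq_fallingProd_of_lt (ha0 : a 0 = 1) (hap : ∀ i, p ≤ i → a i = 0)
    (hlt : ∀ r, 1 ≤ r → r ≤ p - 1 → (r ! : A) * a r = fallingProd (a 1) m r)
    (hprod : fallingProd (a 1) m p = 0) (n : ℕ) :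
    (n ! : A) * a n = fallingProd (a 1) m n := by
  rcases Nat.eq_zero_or_pos n with rfl | hn
  · simp [ha0]
  rcases lt_or_ge n p with hnp | hpn
  · exact hlt n hn (by omega)
  · rw [hap n hpn, mul_zero, fallingProd_eq_zero_of_le _ _ hprod hpn]

theorem factorial_mul_eq_fallingProd_of_recursion (ha0 : a 0 = 1) (hap : ∀ i, p ≤ i → a i = 0)
    (hrec : ∀ r, 1 ≤ r → r ≤ p → a (r - 1) * a 1 = ((r - 1 : ℕ) : A) * m * a (r - 1) + r * a r)
    (n : ℕ) : (n ! : A) * a n = fallingProd (a 1) m n := by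
  have hle : ∀ n ≤ p, (n ! : A) * a n = fallingProd (a 1) m n := by
    intro n
    induction n with
    | zero => simp [ha0]
    | succ n ih =>
      intro hn
      have h := hrec (n + 1) (by omega) hn
      rw [Nat.add_sub_cancel] at h
      rw [fallingProd_succ, ← ih (by omega), factorial_succ]
      push_cast at h ⊢
      linear_combination (-(n ! : A)) * h
  rcases le_or_gt n p with hnp | hpn
  · exact hle n hnp
  · have hp : fallingProd (a 1) m p = 0 := by rw [← hle p le_rfl, hap p le_rfl, mul_zero]
    rw [hap n hpn.le, mul_zero, fallingProd_eq_zero_of_le _ _ hp hpn.le]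

theorem recursion_of_factorial_mul_eq
    (hu : ∀ n, n < p → IsUnit (n ! : A))
    (hfac : ∀ n, (n ! : A) * a n = fallingProd (a 1) m n)
    (r : ℕ) (hr1 : 1 ≤ r) (hrp : r ≤ p) :
    a (r - 1) * a 1 = ((r - 1 : ℕ) : A) * m * a (r - 1) + r * a r := by
  obtain ⟨n, rfl⟩ : ∃ n, r = n + 1 := ⟨r - 1, by omega⟩
  rw [Nat.add_sub_cancel]
  refine (hu n (by omega)).mul_left_cancel ?_
  have hsucc := hfac (n + 1)
  rw [fallingProd_succ, ← hfac n, factorial_succ] at hsucc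
  push_cast at hsucc ⊢
  linear_combination -hsucc

theorem mul_eq_sum_of_factorial_mul_eq (hu : ∀ n, n < p → IsUnit (n ! : A))
    (hfac : ∀ n, (n ! : A) * a n = fallingProd (a 1) m n)
    (r l : ℕ) (hr : r < p) (hl : l < p) :
    a r * a l = ∑ i ∈ Icc (max r l) (r + l),
      ((i ! / ((r + l - i)! * (i - l)! * (i - r)!) : ℕ) : A) * m ^ (r + l - i) * a i := by
  refine ((hu r hr).mul (hu l hl)).mul_left_cancel ?_
  have hterm : ∀ i ∈ Icc (max r l) (r + l),
      (r ! * l ! : A) * (((i ! / ((r + l - i)! * (i - l)! * (i - r)!) : ℕ) : A) *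
        m ^ (r + l - i) * a i) =
      (l.choose (r + l - i) * r.descFactorial (r + l - i) : A) * m ^ (r + l - i) *
        fallingProd (a 1) m (r + l - (r + l - i)) := by
    intro i hi
    rw [mem_Icc, max_le_iff] at hi
    rw [show r + l - (r + l - i) = i by omega, ← hfac i]
    have hc := congrArg (Nat.cast : ℕ → A)
      (factorial_mul_factorial_mul_div hi.1.1 hi.1.2 hi.2)
    push_cast at hc
    linear_combination (m ^ (r + l - i) * a i) * hc
  calc (r ! * l ! : A) * (a r * a l)
      = fallingProd (a 1) m r * fallingProd (a 1) m l := by rw [← hfac, ← hfac]; ring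
    _ = ∑ k ∈ range (l + 1),
          (l.choose k * r.descFactorial k : A) * m ^ k * fallingProd (a 1) m (r + l - k) :=
        fallingProd_mul_fallingProd _ _ r l
    _ = _ := by
        rw [mul_sum, sum_congr rfl hterm]
        exact sum_range_succ_eq_sum_Icc_reflect _
          (fun k hk => by simp [descFactorial_eq_zero_iff_lt.2 hk]) l

theorem recursion_of_mul_eq_sum (ha0 : a 0 = 1) (hp : 2 ≤ p)
    (hmul : ∀ r l, 1 ≤ r → r ≤ p - 1 → 1 ≤ l → l ≤ p - 1 →
      a r * a l = ∑ i ∈ Icc (max r l) (r + l),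
        ((i ! / ((r + l - i)! * (i - l)! * (i - r)!) : ℕ) : A) * m ^ (r + l - i) * a i)
    (r : ℕ) (hr1 : 1 ≤ r) (hrp : r ≤ p) :
    a (r - 1) * a 1 = ((r - 1 : ℕ) : A) * m * a (r - 1) + r * a r := by
  obtain ⟨n, rfl⟩ : ∃ n, r = n + 1 := ⟨r - 1, by omega⟩
  rw [Nat.add_sub_cancel]
  rcases Nat.eq_zero_or_pos n with rfl | hn
  · simp [ha0]
  have hcoeff : ∀ i, n ≤ i → i ≤ n + 1 → n ! * (i ! / ((n + 1 - i)! * (i - 1)! * (i - n)!)) =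
      (1 : ℕ).choose (n + 1 - i) * n.descFactorial (n + 1 - i) * i ! := by
    intro i hni hin
    simpa using factorial_mul_factorial_mul_div hni (by omega) hin
  have hcoeff_left : n ! / ((n + 1 - n)! * (n - 1)! * (n - n)!) = n := by
    apply Nat.eq_of_mul_eq_mul_left (factorial_pos n)
    rw [hcoeff n le_rfl (by omega)]
    simp [mul_comm]
  have hcoeff_right : (n + 1)! / ((n + 1 - (n + 1))! * (n + 1 - 1)! * (n + 1 - n)!) = n + 1 := by
    apply Nat.eq_of_mul_eq_mul_left (factorial_pos n)
    rw [hcoeff (n + 1) (by omega) le_rfl]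
    simp [factorial_succ, mul_comm]
  rw [hmul n 1 hn (by omega) le_rfl (by omega), max_eq_left hn,
    show Icc n (n + 1) = {n, n + 1} by ext i; simp only [mem_Icc, mem_insert, mem_singleton]; omega,
    sum_pair (by omega), hcoeff_left, hcoeff_right, show n + 1 - n = 1 by omega, Nat.sub_self]
  push_cast
  ring

theorem tfae_fallingProd_recursion_mul_eq_sum (hp : 2 ≤ p) (hu : ∀ n, n < p → IsUnit (n ! : A))
    (ha0 : a 0 = 1) (hap : ∀ i, p ≤ i → a i = 0) :
    List.TFAE
      [ (∀ r, 1 ≤ r → r ≤ p - 1 → (r ! : A) * a r = fallingProd (a 1) m r) ∧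
          fallingProd (a 1) m p = 0,
        ∀ r, 1 ≤ r → r ≤ p → a (r - 1) * a 1 = ((r - 1 : ℕ) : A) * m * a (r - 1) + r * a r,
        ∀ r l, 1 ≤ r → r ≤ p - 1 → 1 ≤ l → l ≤ p - 1 →
          a r * a l = ∑ i ∈ Icc (max r l) (r + l),
            ((i ! / ((r + l - i)! * (i - l)! * (i - r)!) : ℕ) : A) * m ^ (r + l - i) * a i ] := by
  tfae_have 1 → 2 := fun h ↦
    recursion_of_factorial_mul_eq hu (factorial_mul_eq_fallingProd_of_lt ha0 hap h.1 h.2)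
  tfae_have 2 → 1 := fun h ↦
    have hfac := factorial_mul_eq_fallingProd_of_recursion ha0 hap h
    ⟨fun r _ _ ↦ hfac r, by rw [← hfac, hap p le_rfl, mul_zero]⟩
  tfae_have 1 → 3 := fun h r l _ hr _ hl ↦
    mul_eq_sum_of_factorial_mul_eq hu (factorial_mul_eq_fallingProd_of_lt ha0 hap h.1 h.2) r l
      (by omega) (by omega)
  tfae_have 3 → 2 := recursion_of_mul_eq_sum ha0 hp
  tfae_finish

end Recursion

theorem stmt_3_general (p : ℕ) (hp : p.Prime) (R : Type*) [CommRing R] [IsDomain R]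
    [IsDiscreteValuationRing R] [CharP (IsLocalRing.ResidueField R) p]
    (μ lam : R) (a : ℕ → R ⧸ Ideal.span {lam}) (ha0 : a 0 = 1) (hap : ∀ i, p ≤ i → a i = 0) :
    List.TFAE
      [ (∀ r, 1 ≤ r → r ≤ p - 1 →
            (Nat.factorial r : R ⧸ Ideal.span {lam}) * a r =
              ∏ k ∈ Finset.range r,
                (a 1 - (k : R ⧸ Ideal.span {lam}) * Ideal.Quotient.mk (Ideal.span {lam}) μ)) ∧
          ∏ k ∈ Finset.range p,
              (a 1 - (k : R ⧸ Ideal.span {lam}) * Ideal.Quotient.mk (Ideal.span {lam}) μ) = 0,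
        ∀ r, 1 ≤ r → r ≤ p →
          a (r - 1) * a 1 =
            ((r - 1 : ℕ) : R ⧸ Ideal.span {lam}) * Ideal.Quotient.mk (Ideal.span {lam}) μ
                * a (r - 1)
              + (r : R ⧸ Ideal.span {lam}) * a r,
        ∀ r l, 1 ≤ r → r ≤ p - 1 → 1 ≤ l → l ≤ p - 1 →
          a r * a l =
            ∑ i ∈ Finset.Icc (max r l) (r + l),
              ((Nat.factorial i /
                  (Nat.factorial (r + l - i) * Nat.factorial (i - l) * Nat.factorial (i - r)) :
                    ℕ) : R ⧸ Ideal.span {lam}) *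
                Ideal.Quotient.mk (Ideal.span {lam}) μ ^ (r + l - i) * a i ] := by
  have hu (n : ℕ) (hn : n < p) : IsUnit (n ! : R ⧸ Ideal.span {lam}) := by
    simpa using (isUnit_natCast_factorial_of_lt (R := R) hp hn).map (Ideal.Quotient.mk _)
  exact tfae_fallingProd_recursion_mul_eq_sum hp.two_le hu ha0 hap

/-- Equivalence of three recursions/identities for the coefficients
`a_1, …, a_{p-1} ∈ A = R/λR` (with conventions `a_0 = 1`, `a_i = 0` for `i ≥ p`),
where `μ, λ` are nonzero elements of the maximal ideal of `R` and `μ̄` is the image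
of `μ` in `A`. -/
theorem stmt_3 (p : ℕ) (hp : p.Prime) (R : Type*) [CommRing R] [IsDomain R]
    [IsDiscreteValuationRing R] [CharZero R] [CharP (IsLocalRing.ResidueField R) p]
    (μ lam : R) (hμ0 : μ ≠ 0) (hlam0 : lam ≠ 0)
    (hμm : μ ∈ IsLocalRing.maximalIdeal R) (hlamm : lam ∈ IsLocalRing.maximalIdeal R)
    (a : ℕ → R ⧸ Ideal.span {lam}) (ha0 : a 0 = 1) (hap : ∀ i, p ≤ i → a i = 0) :
    List.TFAE
      [ (∀ r, 1 ≤ r → r ≤ p - 1 →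
            (Nat.factorial r : R ⧸ Ideal.span {lam}) * a r =
              ∏ k ∈ Finset.range r,
                (a 1 - (k : R ⧸ Ideal.span {lam}) * Ideal.Quotient.mk (Ideal.span {lam}) μ)) ∧
          ∏ k ∈ Finset.range p,
              (a 1 - (k : R ⧸ Ideal.span {lam}) * Ideal.Quotient.mk (Ideal.span {lam}) μ) = 0,
        ∀ r, 1 ≤ r → r ≤ p →
          a (r - 1) * a 1 =
            ((r - 1 : ℕ) : R ⧸ Ideal.span {lam}) * Ideal.Quotient.mk (Ideal.span {lam}) μ
                * a (r - 1)
              + (r : R ⧸ Ideal.span {lam}) * a r,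
        ∀ r l, 1 ≤ r → r ≤ p - 1 → 1 ≤ l → l ≤ p - 1 →
          a r * a l =
            ∑ i ∈ Finset.Icc (max r l) (r + l),
              ((Nat.factorial i /
                  (Nat.factorial (r + l - i) * Nat.factorial (i - l) * Nat.factorial (i - r)) :
                    ℕ) : R ⧸ Ideal.span {lam}) *
                Ideal.Quotient.mk (Ideal.span {lam}) μ ^ (r + l - i) * a i ] :=
  stmt_3_general p hp R μ lam a ha0 hap
end

section
/- Let μ, λ ∈ R be nonzero elements of the maximal ideal, set A := R/λR with μ̄ ∈ A the image of μ, and let F ∈ A[S] be a polynomial of degree at most p−1, with constant coefficient a_0 and coefficient of S equal to a_1. Then the identity F(S)·F(T) − a_0² = F(S + T + μ̄·S·T) − a_0 holds in the polynomial ring A[S,T] if and only if the identity a_1·F(S) = F′(S)·(1 + μ̄·S) holds in A[S], where F′ denotes the formal derivative of F. -/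
/-!
Differentiating the functional equation in `T` and putting `T = 0` gives the differential
equation. Conversely, if `F` satisfies it, then the defect
`D(S, T) = F(S)F(T) - a₀² - F(S + T + μST) + a₀`, viewed as a polynomial in `T`, satisfies the
same equation `a₁ D = ∂D/∂T · (1 + μT)`, because `(1 + μS)(1 + μT) = 1 + μ(S + T + μST)`.
Moreover `D(S, 0) = 0` and `deg_T D < p`. Since `1, …, p - 1` are units in `A`, the
coefficient recursion `(n + 1) d_{n+1} = (a₁ - nμ) d_n` then forces `D = 0`.
-/

open Polynomial

section

variable {A : Type*} [CommRing A]

theorem Polynomial.natDegree_aeval_le {B : Type*} [CommRing B] [Algebra A B] (F : A[X]) (g : B[X]) :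
    (aeval g F).natDegree ≤ F.natDegree * g.natDegree := by
  rw [← aeval_map_algebraMap B, ← comp_eq_aeval]
  exact natDegree_comp_le.trans (Nat.mul_le_mul_right _ natDegree_map_le)

theorem Polynomial.derivative_aeval {B : Type*} [CommRing B] [Algebra A B] (F : A[X]) (g : B[X]) :
    derivative (aeval g F) = aeval g (derivative F) * derivative g := by
  simpa only [Derivation.restrictScalars_apply, derivative'_apply, smul_eq_mul] using
    ((derivative' (R := B)).restrictScalars A).map_aeval F g

theorem Polynomial.coeff_succ_of_ode {α β : A} {q : A[X]}
    (h : C α * q = derivative q * (1 + C β * X)) (n : ℕ) :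
    ((n : A) + 1) * q.coeff (n + 1) = (α - n * β) * q.coeff n := by
  have hn := congrArg (coeff · n) h
  rw [mul_add, mul_one, mul_left_comm, ← mul_assoc] at hn
  rcases n with _ | n
  · simpa [coeff_derivative] using hn.symm
  simp only [coeff_add, coeff_C_mul, coeff_mul_X, coeff_derivative] at hn
  push_cast at hn ⊢
  linear_combination -hn

theorem Polynomial.eq_zero_of_ode {α β : A} {q : A[X]}
    (h : C α * q = derivative q * (1 + C β * X))
    (hu : ∀ n < q.natDegree, IsUnit ((n : A) + 1)) (h0 : q.coeff 0 = 0) : q = 0 := by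
  ext n
  induction n with
  | zero => exact h0
  | succ n ih =>
    rw [coeff_zero]
    by_cases hn : n < q.natDegree
    · apply (hu n hn).mul_right_eq_zero.mp
      rw [coeff_succ_of_ode h, ih, coeff_zero, mul_zero]
    · exact coeff_eq_zero_of_natDegree_lt (by omega)

theorem Polynomial.coeff_one_mul_coeff_zero_of_ode {μ : A} {F : A[X]}
    (hF : C (F.coeff 1) * F = derivative F * (1 + C μ * X)) :
    F.coeff 1 * F.coeff 0 = F.coeff 1 := by
  linear_combination -coeff_succ_of_ode hF 0

/-- `(F - a₀)(a₀ - 1)` solves the same equation (as `a₁a₀ = a₁`) and has no constant term. -/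
theorem Polynomial.sub_C_mul_C_eq_zero_of_ode {μ : A} {F : A[X]}
    (hF : C (F.coeff 1) * F = derivative F * (1 + C μ * X))
    (hu : ∀ n < F.natDegree, IsUnit ((n : A) + 1)) :
    (F - C (F.coeff 0)) * C (F.coeff 0 - 1) = 0 := by
  have hc : C (F.coeff 1) * C (F.coeff 0 - 1) = 0 := by
    rw [← C_mul, ← C_0]
    congr 1
    linear_combination coeff_one_mul_coeff_zero_of_ode hF
  have hdeg : ((F - C (F.coeff 0)) * C (F.coeff 0 - 1)).natDegree ≤ F.natDegree := by
    grw [natDegree_mul_C_le, natDegree_sub_C]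
  refine eq_zero_of_ode (α := F.coeff 1) (β := μ) ?_ (fun n hn => hu n (hn.trans_le hdeg)) (by simp)
  rw [derivative_mul, derivative_sub, derivative_C, derivative_C]
  linear_combination C (F.coeff 0 - 1) * hF - C (F.coeff 0) * hc

section FunctionalEquation

variable (F : A[X]) (μ : A) {B : Type*} [CommRing B] [Algebra A B]

noncomputable def functionalEqDefect (s t : B) : B :=
  aeval s F * aeval t F - algebraMap A B (F.coeff 0) ^ 2 -
    (aeval (s + t + algebraMap A B μ * s * t) F - algebraMap A B (F.coeff 0))

theorem map_functionalEqDefect {B' : Type*} [CommRing B'] [Algebra A B'] (f : B →ₐ[A] B')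
    (s t : B) : f (functionalEqDefect F μ s t) = functionalEqDefect F μ (f s) (f t) := by
  simp only [functionalEqDefect, map_sub, map_mul, map_pow, map_add, AlgHom.commutes,
    ← aeval_algHom_apply]

theorem functionalEqDefect_zero_right (s : B) :
    functionalEqDefect F μ s 0 =
      (aeval s F - algebraMap A B (F.coeff 0)) * (algebraMap A B (F.coeff 0) - 1) := by
  simp only [functionalEqDefect, ← coeff_zero_eq_aeval_zero']
  ring_nf

/-! In `A[X][X]` the inner variable `C X` plays the role of `S` and the outer variable `X` that
of `T`, so `derivative` is `∂/∂T`. -/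

theorem natDegree_functionalEqDefect_le :
    (functionalEqDefect F μ (C X : A[X][X]) X).natDegree ≤ F.natDegree := by
  have hle : ∀ g : A[X][X], g.natDegree ≤ 1 → (aeval g F).natDegree ≤ F.natDegree := fun g hg =>
    (natDegree_aeval_le F g).trans (by simpa using Nat.mul_le_mul_left F.natDegree hg)
  have hS : (aeval (C X : A[X][X]) F).natDegree = 0 := by
    simpa using natDegree_aeval_le F (C X : A[X][X])
  unfold functionalEqDefect
  refine (natDegree_sub_le _ _).trans <| max_le ((natDegree_sub_le _ _).trans <| max_le ?_ ?_)
    ((natDegree_sub_le _ _).trans <| max_le ?_ ?_)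
  · exact natDegree_mul_le.trans (by rw [hS, zero_add]; exact hle X natDegree_X_le)
  · simp [← map_pow]
  · exact hle _ (by compute_degree)
  · simp

theorem coeff_zero_functionalEqDefect :
    (functionalEqDefect F μ (C X : A[X][X]) X).coeff 0 =
      (F - C (F.coeff 0)) * (C (F.coeff 0) - 1) := by
  have h := map_functionalEqDefect F μ ((aeval (0 : A[X])).restrictScalars A) (C X : A[X][X]) X
  simp only [AlgHom.coe_restrictScalars', coe_aeval_eq_eval, aeval_C, Algebra.algebraMap_self,
    RingHom.id_apply, aeval_X] at h
  rw [coeff_zero_eq_eval_zero, h, functionalEqDefect_zero_right]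
  simp

theorem derivative_functionalEqDefect :
    derivative (functionalEqDefect F μ (C X : A[X][X]) X) =
      aeval (C X) F * aeval X (derivative F) -
        aeval (C X + X + C (C μ) * C X * X) (derivative F) * C (1 + C μ * X) := by
  simp [functionalEqDefect, derivative_aeval, ← map_pow]

theorem ode_of_functionalEqDefect_eq_zero (h : functionalEqDefect F μ (C X : A[X][X]) X = 0) :
    C (F.coeff 1) * F = derivative F * (1 + C μ * X) := by
  have h0 := congrArg (fun D => (aeval (0 : A[X])).restrictScalars A (derivative D)) h
  simp only [derivative_functionalEqDefect, map_sub, map_mul, ← aeval_algHom_apply] at h0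
  rw [mul_comm]
  simpa [← coeff_zero_eq_aeval_zero', coeff_derivative, sub_eq_zero] using h0

theorem functionalEqDefect_eq_zero_of_ode (hF : C (F.coeff 1) * F = derivative F * (1 + C μ * X))
    (hu : ∀ n < F.natDegree, IsUnit ((n : A) + 1)) :
    functionalEqDefect F μ (C X : A[X][X]) X = 0 := by
  have hD : C (C (F.coeff 1)) * functionalEqDefect F μ (C X : A[X][X]) X =
      derivative (functionalEqDefect F μ (C X : A[X][X]) X) * (1 + C (C μ) * X) := by
    have hT := congrArg (aeval (X : A[X][X])) hF
    have hG := congrArg (aeval (C X + X + C (C μ) * C X * X : A[X][X])) hF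
    have hc := congrArg (fun a => C (C a)) (coeff_one_mul_coeff_zero_of_ode hF)
    rw [derivative_functionalEqDefect]
    simp only [functionalEqDefect, map_mul, map_add, map_one, aeval_C, aeval_X,
      Polynomial.algebraMap_apply, algebraMap_eq] at hT hG hc ⊢
    -- `(1 + μS)(1 + μT) = 1 + μ(S + T + μST)`, and `a₁a₀² = a₁a₀`
    linear_combination aeval (C X) F * hT - hG - C (C (F.coeff 0)) * hc
  refine eq_zero_of_ode hD (fun n hn => ?_) ?_
  · simpa using (hu n (hn.trans_le (natDegree_functionalEqDefect_le F μ))).map (C : A →+* A[X])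
  · rw [coeff_zero_functionalEqDefect]
    simpa using sub_C_mul_C_eq_zero_of_ode hF hu

theorem functionalEqDefect_eq_zero_iff_ode (hu : ∀ n < F.natDegree, IsUnit ((n : A) + 1)) :
    functionalEqDefect F μ (C X : A[X][X]) X = 0 ↔
      C (F.coeff 1) * F = derivative F * (1 + C μ * X) :=
  ⟨ode_of_functionalEqDefect_eq_zero F μ, fun hF => functionalEqDefect_eq_zero_of_ode F μ hF hu⟩

theorem functionalEqDefect_X_zero_X_one_eq_zero_iff :
    functionalEqDefect F μ (MvPolynomial.X 0 : MvPolynomial (Fin 2) A) (MvPolynomial.X 1) = 0 ↔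
      functionalEqDefect F μ (C X : A[X][X]) X = 0 := by
  constructor
  · intro h
    have := map_functionalEqDefect F μ (MvPolynomial.aeval ![(C X : A[X][X]), X])
      (MvPolynomial.X 0) (MvPolynomial.X 1)
    simpa [h] using this.symm
  · intro h
    have := map_functionalEqDefect F μ
      (aevalTower (aeval (MvPolynomial.X 0 : MvPolynomial (Fin 2) A)) (MvPolynomial.X 1)) (C X) X
    simpa [h] using this.symm

end FunctionalEquation

end

theorem IsLocalRing.isUnit_natCast_of_not_dvd {R : Type*} [CommRing R] [IsLocalRing R] (p : ℕ)
    [CharP (ResidueField R) p] {n : ℕ} (hn : ¬ p ∣ n) : IsUnit (n : R) := by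
  rwa [← notMem_maximalIdeal, ← residue_eq_zero_iff, map_natCast,
    CharP.cast_eq_zero_iff (ResidueField R) p]

theorem stmt_4_general (p : ℕ) (R : Type*) [CommRing R] [IsDomain R]
    [IsDiscreteValuationRing R] [CharP (IsLocalRing.ResidueField R) p]
    (μ lam : R)
    (F : Polynomial (R ⧸ Ideal.span {lam})) (hdeg : F.natDegree ≤ p - 1) :
    (Polynomial.aeval (MvPolynomial.X 0 : MvPolynomial (Fin 2) (R ⧸ Ideal.span {lam})) F *
          Polynomial.aeval (MvPolynomial.X 1 : MvPolynomial (Fin 2) (R ⧸ Ideal.span {lam})) F -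
          MvPolynomial.C (F.coeff 0) ^ 2 =
        Polynomial.aeval
            (MvPolynomial.X 0 + MvPolynomial.X 1 +
              MvPolynomial.C (Ideal.Quotient.mk (Ideal.span {lam}) μ) * MvPolynomial.X 0 *
                MvPolynomial.X 1 : MvPolynomial (Fin 2) (R ⧸ Ideal.span {lam})) F -
          MvPolynomial.C (F.coeff 0)) ↔
      Polynomial.C (F.coeff 1) * F =
        Polynomial.derivative F *
          (1 + Polynomial.C (Ideal.Quotient.mk (Ideal.span {lam}) μ) * Polynomial.X) := by
  have hu : ∀ n < F.natDegree, IsUnit ((n : R ⧸ Ideal.span {lam}) + 1) := fun n hn => by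
    have hR := IsLocalRing.isUnit_natCast_of_not_dvd (R := R) p
      (Nat.not_dvd_of_pos_of_lt n.succ_pos (by omega))
    simpa using hR.map (Ideal.Quotient.mk (Ideal.span {lam}))
  rw [← functionalEqDefect_eq_zero_iff_ode F _ hu, ← functionalEqDefect_X_zero_X_one_eq_zero_iff,
    functionalEqDefect, sub_eq_zero, MvPolynomial.algebraMap_eq]

/-- For `μ, λ` nonzero elements of the maximal ideal of `R`, `A := R/λR`,
`μ̄` the image of `μ`, and `F ∈ A[S]` of degree at most `p-1` with constant coefficient
`a₀` and linear coefficient `a₁`: the identity `F(S)·F(T) - a₀² = F(S + T + μ̄·S·T) - a₀`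
holds in `A[S,T]` iff `a₁·F(S) = F'(S)·(1 + μ̄·S)` holds in `A[S]`. -/
theorem stmt_4 (p : ℕ) (hp : p.Prime) (R : Type*) [CommRing R] [IsDomain R]
    [IsDiscreteValuationRing R] [CharZero R] [CharP (IsLocalRing.ResidueField R) p]
    (μ lam : R) (hμ0 : μ ≠ 0) (hlam0 : lam ≠ 0)
    (hμm : μ ∈ IsLocalRing.maximalIdeal R) (hlamm : lam ∈ IsLocalRing.maximalIdeal R)
    (F : Polynomial (R ⧸ Ideal.span {lam})) (hdeg : F.natDegree ≤ p - 1) :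
    (Polynomial.aeval (MvPolynomial.X 0 : MvPolynomial (Fin 2) (R ⧸ Ideal.span {lam})) F *
          Polynomial.aeval (MvPolynomial.X 1 : MvPolynomial (Fin 2) (R ⧸ Ideal.span {lam})) F -
          MvPolynomial.C (F.coeff 0) ^ 2 =
        Polynomial.aeval
            (MvPolynomial.X 0 + MvPolynomial.X 1 +
              MvPolynomial.C (Ideal.Quotient.mk (Ideal.span {lam}) μ) * MvPolynomial.X 0 *
                MvPolynomial.X 1 : MvPolynomial (Fin 2) (R ⧸ Ideal.span {lam})) F -
          MvPolynomial.C (F.coeff 0)) ↔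
      Polynomial.C (F.coeff 1) * F =
        Polynomial.derivative F *
          (1 + Polynomial.C (Ideal.Quotient.mk (Ideal.span {lam}) μ) * Polynomial.X) :=
  stmt_4_general p R μ lam F hdeg
end

section
/- Let λ ∈ R be a nonzero element of the maximal ideal and set A := R/λR. Let a ∈ A and let F ∈ A[S] be a polynomial of degree at most p−1 with F(0) = 1 satisfying the differential equation F′(S) = a·F(S) in A[S] (F′ the formal derivative). Then necessarily a^p = 0 and F = Σ_{i=0}^{p−1} ((i!)^{−1}·a^i)·S^i; in particular the solution is unique. -/
/-!
Comparing coefficients in `F' = a F` gives `(i + 1) F_{i+1} = a F_i`, hence `i! F_i = a^i F_0`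
for every `i`, in any commutative semiring. Taking `i = p`, where `F_p = 0` by the degree bound,
gives `a^p = 0`; for `i < p` the factorial `i!` is a unit in `R` (its residue is a unit, the
residue characteristic being `p`), hence in `R/λR`, and the coefficients are determined.
-/

open Polynomial Nat

namespace Polynomial

variable {A : Type*} [CommSemiring A] {F : A[X]} {a : A}

theorem factorial_mul_coeff_of_derivative_eq_C_mul (hF : derivative F = C a * F) (n : ℕ) :
    (n ! : A) * F.coeff n = a ^ n * F.coeff 0 := by
  induction n with
  | zero => simp
  | succ n ih =>
    have hrec : F.coeff (n + 1) * (n + 1) = a * F.coeff n := by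
      simpa [coeff_derivative] using congrArg (coeff · n) hF
    calc ((n + 1)! : A) * F.coeff (n + 1) = (n ! : A) * (F.coeff (n + 1) * (n + 1)) := by
          push_cast [factorial_succ]; ring
      _ = a ^ (n + 1) * F.coeff 0 := by rw [hrec, mul_left_comm, ih]; ring

theorem coeff_eq_inverse_factorial_mul_of_derivative_eq_C_mul (hF : derivative F = C a * F)
    {n : ℕ} (hn : IsUnit (n ! : A)) :
    F.coeff n = Ring.inverse (n ! : A) * a ^ n * F.coeff 0 := by
  rw [mul_assoc, ← factorial_mul_coeff_of_derivative_eq_C_mul hF,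
    Ring.inverse_mul_cancel_left _ _ hn]

end Polynomial

theorem IsLocalRing.isUnit_natCast_factorial {R : Type*} [CommRing R] [IsLocalRing R] (p : ℕ)
    [Fact p.Prime] [CharP (ResidueField R) p] {n : ℕ} (hn : n < p) : IsUnit (n ! : R) :=
  isUnit_of_map_unit (residue R) _ <| by
    rw [map_natCast]; exact (IsUnit.natCast_factorial_iff_of_charP p).mpr hn

theorem stmt_7_general (p : ℕ) (hp : p.Prime) (R : Type*) [CommRing R] [IsDomain R]
    [IsDiscreteValuationRing R] [CharP (IsLocalRing.ResidueField R) p]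
    (lam : R)
    (a : R ⧸ Ideal.span {lam}) (F : Polynomial (R ⧸ Ideal.span {lam}))
    (hdeg : F.natDegree ≤ p - 1) (hF0 : F.eval 0 = 1)
    (hode : Polynomial.derivative F = Polynomial.C a * F) :
    a ^ p = 0 ∧
      F = ∑ i ∈ Finset.range p,
            Polynomial.C (Ring.inverse (Nat.factorial i : R ⧸ Ideal.span {lam}) * a ^ i) *
              Polynomial.X ^ i := by
  have := Fact.mk hp
  rw [← coeff_zero_eq_eval_zero] at hF0
  have hdeg' : F.natDegree < p := by have := hp.pos; omega
  have hunit (i : ℕ) (hi : i < p) : IsUnit (i ! : R ⧸ Ideal.span {lam}) := by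
    simpa only [map_natCast] using
      (IsLocalRing.isUnit_natCast_factorial p hi).map (Ideal.Quotient.mk (Ideal.span {lam}))
  constructor
  · simpa [coeff_eq_zero_of_natDegree_lt hdeg', hF0] using
      (factorial_mul_coeff_of_derivative_eq_C_mul hode p).symm
  · rw [F.as_sum_range_C_mul_X_pow' hdeg']
    refine Finset.sum_congr rfl fun i hi => ?_
    rw [coeff_eq_inverse_factorial_mul_of_derivative_eq_C_mul hode
      (hunit i (Finset.mem_range.mp hi)), hF0, mul_one]

/-- Let `λ` be a nonzero element of the maximal ideal of `R`, `A := R/λR`.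
If `F ∈ A[S]` has degree at most `p-1`, `F(0) = 1` and `F' = a·F`, then `a^p = 0` and
`F = Σ_{i=0}^{p-1} (i!)⁻¹·a^i·S^i`; in particular the solution is unique. -/
theorem stmt_7 (p : ℕ) (hp : p.Prime) (R : Type*) [CommRing R] [IsDomain R]
    [IsDiscreteValuationRing R] [CharZero R] [CharP (IsLocalRing.ResidueField R) p]
    (lam : R) (hlam0 : lam ≠ 0) (hlamm : lam ∈ IsLocalRing.maximalIdeal R)
    (a : R ⧸ Ideal.span {lam}) (F : Polynomial (R ⧸ Ideal.span {lam}))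
    (hdeg : F.natDegree ≤ p - 1) (hF0 : F.eval 0 = 1)
    (hode : Polynomial.derivative F = Polynomial.C a * F) :
    a ^ p = 0 ∧
      F = ∑ i ∈ Finset.range p,
            Polynomial.C (Ring.inverse (Nat.factorial i : R ⧸ Ideal.span {lam}) * a ^ i) *
              Polynomial.X ^ i :=
  stmt_7_general p hp R lam a F hdeg hF0 hode
end

section
/- Assume p > 2. Let μ, λ ∈ R be nonzero with v(p) ≥ (p−1)·v(μ) > 0 and v(μ) ≥ v(λ) > 0, let c₀ ∈ R be the element with c₀·μ^{p−1} = p, set A := R/λR and let c ∈ A be the image of c₀. Suppose a ∈ A satisfies a^p = 0 and b ∈ 𝕎(A) lies in Ŵ(A) with F(b) = 0. If [c]·b + V(b) = [a] in 𝕎(A), then b = 0 and a = 0. -/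
/-!
Let `I` be the ideal generated by the coefficients of `b`; it is finitely generated by nilpotents,
hence nilpotent. The carries of Witt vector addition are sums of products of coefficients of the
two summands, so if all `bₙ` lie in an ideal `K`, comparing the `(n+1)`-st coefficients of
`[c] b + V b = [a]` gives `bₙ + c^{p^{n+1}} bₙ₊₁ ∈ K²`, and descending induction from the last
nonzero coefficient puts every `bₙ` in `K²`. Hence `b` has coefficients in `I^{2^k}` for all `k`,
so `b = 0`, and then the zeroth coefficient gives `a = 0`.
-/

theorem Ideal.mem_of_add_mul_succ_mem {A : Type*} [CommRing A] {K : Ideal A} {f r : ℕ → A}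
    {N : ℕ} (hN : ∀ n, N ≤ n → f n = 0) (h : ∀ n, f n + r n * f (n + 1) ∈ K) (n : ℕ) :
    f n ∈ K := by
  induction hd : N - n generalizing n with
  | zero => simp [hN n (by omega)]
  | succ d ih => simpa using K.sub_mem (h n) (K.mul_mem_left (r n) (ih (n + 1) (by omega)))

namespace MvPolynomial

variable {σ R B : Type*} [CommSemiring R] [CommRing B] [Algebra R B]

theorem aeval_sub_algebraMap_constantCoeff_mem {K : Ideal B} {f : σ → B} (hf : ∀ i, f i ∈ K)
    (P : MvPolynomial σ R) : aeval f P - algebraMap R B (constantCoeff P) ∈ K := by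
  induction P using MvPolynomial.induction_on with
  | C r => simp
  | add P Q hP hQ => simpa [add_sub_add_comm] using K.add_mem hP hQ
  | mul_X P i _ => simpa using K.mul_mem_left _ (hf i)

theorem aeval_add_sub_aeval_sub_aeval_add_mem_mul {I J : Ideal B} {f g : σ → B}
    (hf : ∀ i, f i ∈ I) (hg : ∀ i, g i ∈ J) (P : MvPolynomial σ R) :
    aeval (f + g) P - aeval f P - aeval g P + algebraMap R B (constantCoeff P) ∈ I * J := by
  induction P using MvPolynomial.induction_on with
  | C r => simp
  | add P Q hP hQ =>
    convert (I * J).add_mem hP hQ using 1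
    simp only [map_add]
    ring
  | mul_X P i hP =>
    have hfP := aeval_sub_algebraMap_constantCoeff_mem hf P
    have hgP := aeval_sub_algebraMap_constantCoeff_mem hg P
    -- with `u, u₁, u₂` the values of `P` at `f + g, f, g` and `k` its constant term,
    -- `u (f i + g i) - u₁ f i - u₂ g i`
    --   `= (u - u₁ - u₂ + k) (f i + g i) + (u₂ - k) f i + (u₁ - k) g i`
    convert (I * J).add_mem ((I * J).mul_mem_right (f i + g i) hP)
      ((I * J).add_mem (Ideal.mul_mem_mul (hf i) hgP) (Ideal.mul_mem_mul hfP (hg i))) using 1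
    simp only [map_mul, aeval_X, constantCoeff_X, mul_zero, map_zero, add_zero, Pi.add_apply]
    ring

end MvPolynomial

namespace WittVector

variable {p : ℕ} [Fact p.Prime] {A : Type*} [CommRing A]

local notation "𝕎" => WittVector p

theorem coeff_add_sub_coeff_sub_coeff_mem_mul {I J : Ideal A} {x y : 𝕎 A}
    (hx : ∀ n, x.coeff n ∈ I) (hy : ∀ n, y.coeff n ∈ J) (n : ℕ) :
    (x + y).coeff n - x.coeff n - y.coeff n ∈ I * J := by
  have hsplit : Function.uncurry ![x.coeff, y.coeff] =
      Function.uncurry ![x.coeff, (0 : 𝕎 A).coeff] +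
        Function.uncurry ![(0 : 𝕎 A).coeff, y.coeff] := by
    ext ⟨i, m⟩
    fin_cases i <;> simp
  have key := MvPolynomial.aeval_add_sub_aeval_sub_aeval_add_mem_mul (R := ℤ)
    (f := Function.uncurry ![x.coeff, (0 : 𝕎 A).coeff])
    (g := Function.uncurry ![(0 : 𝕎 A).coeff, y.coeff]) (I := I) (J := J)
    (by rintro ⟨i, m⟩; fin_cases i <;> simp [hx])
    (by rintro ⟨i, m⟩; fin_cases i <;> simp [hy]) (wittAdd p n)
  rw [← hsplit, constantCoeff_wittAdd, map_zero, add_zero] at key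
  have h0 := add_coeff x 0 n
  have h1 := add_coeff 0 y n
  rw [add_zero] at h0
  rw [zero_add] at h1
  rwa [add_coeff, h0, h1]

theorem teichmuller_mul_eq_mk_of_invertible [Invertible (p : A)] (t : A) (x : 𝕎 A) :
    teichmuller p t * x = mk p fun n => t ^ p ^ n * x.coeff n := by
  apply (ghostMap.bijective_of_invertible p A).1
  ext n
  rw [map_mul, Pi.mul_apply, ghostMap_apply, ghostMap_apply, ghostMap_apply,
    ghostComponent_teichmuller, ghostComponent_apply, ghostComponent_apply, coeff_mk,
    aeval_wittPolynomial, aeval_wittPolynomial, Finset.mul_sum]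
  refine Finset.sum_congr rfl fun i hi => ?_
  have hpow : p ^ i * p ^ (n - i) = p ^ n := by
    rw [← pow_add, Nat.add_sub_cancel' (Finset.mem_range_succ_iff.1 hi)]
  rw [mul_pow, ← pow_mul, hpow]
  ring

theorem coeff_teichmuller_mul (t : A) (x : 𝕎 A) (n : ℕ) :
    (teichmuller p t * x).coeff n = t ^ p ^ n * x.coeff n := by
  open MvPolynomial in
  have huniv : teichmuller p (X none : MvPolynomial (Option ℕ) ℤ) * mk p (fun n => X (some n)) =
      mk p fun n => X none ^ p ^ n * X (some n) := by
    refine WittVector.map_injective _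
      (MvPolynomial.map_injective (Int.castRingHom ℚ) Int.cast_injective) ?_
    rw [map_mul, map_teichmuller, teichmuller_mul_eq_mk_of_invertible]
    ext n
    simp [map_coeff]
  let φ : MvPolynomial (Option ℕ) ℤ →+* A :=
    MvPolynomial.eval₂Hom (Int.castRingHom A) (Option.elim · t x.coeff)
  have hx : map φ (mk p fun n => MvPolynomial.X (some n)) = x := by
    ext n
    simp [φ, map_coeff]
  simpa [φ, map_coeff, map_teichmuller, hx] using congrArg (fun w => (map φ w).coeff n) huniv

theorem coeff_add_mul_coeff_succ_mem_mul_of_teichmuller_mul_add_verschiebung_eq {K : Ideal A}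
    {c a : A} {b : 𝕎 A} (heq : teichmuller p c * b + verschiebung b = teichmuller p a)
    (hb : ∀ n, b.coeff n ∈ K) (n : ℕ) :
    b.coeff n + c ^ p ^ (n + 1) * b.coeff (n + 1) ∈ K * K := by
  have hcb : ∀ m, (teichmuller p c * b).coeff m ∈ K := fun m => by
    rw [coeff_teichmuller_mul]
    exact K.mul_mem_left _ (hb m)
  have hVb : ∀ m, (verschiebung b).coeff m ∈ K
    | 0 => by simp
    | m + 1 => by simpa using hb m
  have h := coeff_add_sub_coeff_sub_coeff_mem_mul hcb hVb (n + 1)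
  rw [heq, teichmuller_coeff_pos p a (n + 1) n.succ_pos, coeff_teichmuller_mul,
    verschiebung_coeff_succ] at h
  simpa [add_comm] using neg_mem h

theorem eq_zero_of_teichmuller_mul_add_verschiebung_eq_teichmuller {c a : A} {b : 𝕎 A}
    (hbNil : ∀ n, IsNilpotent (b.coeff n)) (hbFin : ∃ N, ∀ n, N ≤ n → b.coeff n = 0)
    (heq : teichmuller p c * b + verschiebung b = teichmuller p a) : b = 0 := by
  obtain ⟨N, hN⟩ := hbFin
  set I := Ideal.span (Set.range b.coeff)
  have hfin : (Set.range b.coeff).Finite := by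
    refine ((Set.finite_Iio N).image b.coeff |>.insert 0).subset ?_
    rintro _ ⟨n, rfl⟩
    by_cases hn : n < N
    · exact Or.inr ⟨n, hn, rfl⟩
    · exact Or.inl (hN n (not_lt.1 hn))
  obtain ⟨M, hM⟩ : IsNilpotent I :=
    (Ideal.FG.isNilpotent_iff_le_nilradical (Submodule.fg_span hfin)).2 <|
      Ideal.span_le.2 <| by rintro _ ⟨n, rfl⟩; exact hbNil n
  have hpow : ∀ k n, b.coeff n ∈ I ^ 2 ^ k := by
    intro k
    induction k with
    | zero => simpa using fun n => Ideal.subset_span (Set.mem_range_self n)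
    | succ k ih =>
      rw [pow_succ, pow_mul, sq]
      exact Ideal.mem_of_add_mul_succ_mem hN
        (coeff_add_mul_coeff_succ_mem_mul_of_teichmuller_mul_add_verschiebung_eq heq ih)
  ext n
  simpa [hM] using Ideal.pow_le_pow_right (Nat.lt_two_pow_self).le (hpow M n)

end WittVector

theorem stmt_8_general (p : ℕ) [Fact p.Prime]
    (R : Type*) [CommRing R]
    (lam : R)
    (c₀ : R)
    (a : R ⧸ Ideal.span {lam})
    (b : WittVector p (R ⧸ Ideal.span {lam}))
    (hbNil : ∀ n, IsNilpotent (b.coeff n)) (hbFin : ∃ N, ∀ n, N ≤ n → b.coeff n = 0)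
    (heq : WittVector.teichmuller p (Ideal.Quotient.mk (Ideal.span {lam}) c₀) * b +
        WittVector.verschiebung b = WittVector.teichmuller p a) :
    b = 0 ∧ a = 0 := by
  have hb := WittVector.eq_zero_of_teichmuller_mul_add_verschiebung_eq_teichmuller hbNil hbFin heq
  refine ⟨hb, ?_⟩
  simpa [hb] using (congrArg (WittVector.coeff · 0) heq).symm

/-- Assume `p > 2`, `v(p) ≥ (p-1)·v(μ) > 0`, `v(μ) ≥ v(λ) > 0`, and
`c₀·μ^{p-1} = p`. In `𝕎(A)` with `A = R/λR` and `c` the image of `c₀`: if `a^p = 0`,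
`b ∈ Ŵ(A)` with `F(b) = 0`, and `[c]·b + V(b) = [a]`, then `b = 0` and `a = 0`. -/
theorem stmt_8 (p : ℕ) [Fact p.Prime] (hp2 : 2 < p)
    (R : Type*) [CommRing R] [IsDomain R] [IsDiscreteValuationRing R] [CharZero R]
    [CharP (IsLocalRing.ResidueField R) p]
    (v : R → ℕ∞) (π : R) (hπ : Irreducible π) (hv0 : v 0 = ⊤)
    (hv : ∀ x : R, x ≠ 0 → ∃ n : ℕ, v x = n ∧ π ^ n ∣ x ∧ ¬ π ^ (n + 1) ∣ x)
    (μ lam : R) (hμ0 : μ ≠ 0) (hlam0 : lam ≠ 0)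
    (h1 : ((p - 1 : ℕ) : ℕ∞) * v μ ≤ v (p : R)) (h2 : 0 < ((p - 1 : ℕ) : ℕ∞) * v μ)
    (h3 : v lam ≤ v μ) (h4 : 0 < v lam)
    (c₀ : R) (hc₀ : c₀ * μ ^ (p - 1) = (p : R))
    (a : R ⧸ Ideal.span {lam}) (ha : a ^ p = 0)
    (b : WittVector p (R ⧸ Ideal.span {lam}))
    (hbNil : ∀ n, IsNilpotent (b.coeff n)) (hbFin : ∃ N, ∀ n, N ≤ n → b.coeff n = 0)
    (hbF : WittVector.frobenius b = 0)
    (heq : WittVector.teichmuller p (Ideal.Quotient.mk (Ideal.span {lam}) c₀) * b +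
        WittVector.verschiebung b = WittVector.teichmuller p a) :
    b = 0 ∧ a = 0 :=
  stmt_8_general p R lam c₀ a b hbNil hbFin heq
end

section
/- Assume p > 2 and that R contains a primitive p²-th root of unity ζ; set λ_{(1)} := ζ^p − 1. Let μ, λ ∈ R be nonzero with v(λ_{(1)}) ≥ v(μ) ≥ v(λ), and let c ∈ R be the element with c·μ^{p−1} = p (it exists since v(p) = (p−1)·v(λ_{(1)}) ≥ (p−1)·v(μ)). Then for every a ∈ R the following are equivalent: (1) λ divides a^p and λ^p divides p·a − c·a^p; (2) p·v(a) ≥ max(p·v(λ) + (p−1)·v(μ) − v(p), v(λ)). -/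
/-! Substituting `p = c μ^(p-1)` turns `p a - c a^p` into `c μ^(p-1) a - c a^p`. If `μ ∣ a`,
both terms are divisible by `λ^p`; otherwise the second term has strictly smaller valuation.
Either way `λ^p ∣ p a - c a^p ↔ λ^p ∣ c a^p`, and what is left is arithmetic in `ℕ∞` with
`v p = v c + (p - 1) v μ`. -/

namespace IsDiscreteValuationRing

variable {R : Type*} [CommRing R] [IsDomain R] [IsDiscreteValuationRing R]

theorem addVal_eq_of_pow_dvd_of_not_pow_succ_dvd {ϖ x : R} (hϖ : Irreducible ϖ) {n : ℕ}
    (hdvd : ϖ ^ n ∣ x) (hndvd : ¬ϖ ^ (n + 1) ∣ x) : addVal R x = n := by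
  have hval (k : ℕ) : addVal R (ϖ ^ k) = k := by
    rw [addVal_pow, addVal_uniformizer hϖ, nsmul_one]
  refine le_antisymm ?_ (hval n ▸ addVal_le_iff_dvd.mpr hdvd)
  rw [← addVal_le_iff_dvd, hval, not_le] at hndvd
  exact Order.le_of_lt_add_one hndvd

theorem eq_addVal_of_pow_dvd_of_not_pow_succ_dvd {ϖ : R} (hϖ : Irreducible ϖ) (v : R → ℕ∞)
    (hv0 : v 0 = ⊤) (hv : ∀ x : R, x ≠ 0 → ∃ n : ℕ, v x = n ∧ ϖ ^ n ∣ x ∧ ¬ϖ ^ (n + 1) ∣ x) :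
    v = addVal R := by
  funext x
  rcases eq_or_ne x 0 with rfl | hx
  · rw [hv0, addVal_zero]
  · obtain ⟨n, hvx, hdvd, hndvd⟩ := hv x hx
    rw [hvx, addVal_eq_of_pow_dvd_of_not_pow_succ_dvd hϖ hdvd hndvd]

theorem pow_dvd_mul_pow_pred_mul_sub_mul_pow_iff {lam μ x a : R} {n : ℕ} (hn : 2 ≤ n)
    (hlam : lam ∣ μ) :
    lam ^ n ∣ x * μ ^ (n - 1) * a - x * a ^ n ↔ lam ^ n ∣ x * a ^ n := by
  by_cases hμa : μ ∣ a
  · refine dvd_sub_right ?_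
    rw [← pow_sub_one_mul (by omega) lam]
    exact mul_dvd_mul ((pow_dvd_pow_of_dvd hlam _).mul_left x) (hlam.trans hμa)
  rcases eq_or_ne x 0 with rfl | hx
  · simp
  have ha : a ≠ 0 := by rintro rfl; exact hμa (dvd_zero μ)
  have hndvd : ¬x * μ ^ (n - 1) * a ∣ x * a ^ n := by
    rw [← pow_sub_one_mul (by omega) a, ← mul_assoc, mul_dvd_mul_iff_right ha,
      mul_dvd_mul_iff_left hx, UniqueFactorizationMonoid.pow_dvd_pow_iff_dvd (by omega)]
    exact hμa
  have hlt : addVal R (x * a ^ n) < addVal R (x * μ ^ (n - 1) * a) := by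
    rwa [← not_le, addVal_le_iff_dvd]
  rw [← addVal_le_iff_dvd, (addVal R).map_sub_eq_of_lt_right hlt, addVal_le_iff_dvd]

end IsDiscreteValuationRing

open IsDiscreteValuationRing

theorem stmt_10_general (p : ℕ) (hp2 : 2 < p)
    (R : Type*) [CommRing R] [IsDomain R] [IsDiscreteValuationRing R]
    (v : R → ℕ∞) (π : R) (hπ : Irreducible π) (hv0 : v 0 = ⊤)
    (hv : ∀ x : R, x ≠ 0 → ∃ n : ℕ, v x = n ∧ π ^ n ∣ x ∧ ¬ π ^ (n + 1) ∣ x)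
    (μ lam : R) (hμ0 : μ ≠ 0) (h2 : v lam ≤ v μ)
    (c : R) (hc : c * μ ^ (p - 1) = (p : R)) :
    ∀ a : R,
      (lam ∣ a ^ p ∧ lam ^ p ∣ ((p : R) * a - c * a ^ p)) ↔
        max ((p : ℕ∞) * v lam + ((p - 1 : ℕ) : ℕ∞) * v μ - v (p : R)) (v lam) ≤
          (p : ℕ∞) * v a := by
  intro a
  obtain rfl := eq_addVal_of_pow_dvd_of_not_pow_succ_dvd hπ v hv0 hv
  have hμ_ne_top : ((p - 1 : ℕ) : ℕ∞) * addVal R μ ≠ ⊤ :=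
    WithTop.mul_ne_top (ENat.natCast_ne_top _) (addVal_eq_top_iff.not.mpr hμ0)
  rw [← hc, pow_dvd_mul_pow_pred_mul_sub_mul_pow_iff hp2.le (addVal_le_iff_dvd.mp h2),
    max_le_iff, and_comm, ← addVal_le_iff_dvd, ← addVal_le_iff_dvd]
  simp only [addVal_mul, addVal_pow, nsmul_eq_mul]
  rw [tsub_le_iff_left, add_right_comm, ENat.add_le_add_iff_right hμ_ne_top, add_comm]

/-- With `p > 2`, `ζ` a primitive `p²`-th root of unity, `λ₁ := ζ^p - 1`,
`μ, λ` nonzero with `v(λ₁) ≥ v(μ) ≥ v(λ)`, and `c·μ^{p-1} = p`: for every `a ∈ R`,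
`λ ∣ a^p` and `λ^p ∣ p·a - c·a^p` iff `p·v(a) ≥ max(p·v(λ) + (p-1)·v(μ) - v(p), v(λ))`. -/
theorem stmt_10 (p : ℕ) (hp : p.Prime) (hp2 : 2 < p)
    (R : Type*) [CommRing R] [IsDomain R] [IsDiscreteValuationRing R] [CharZero R]
    [CharP (IsLocalRing.ResidueField R) p]
    (v : R → ℕ∞) (π : R) (hπ : Irreducible π) (hv0 : v 0 = ⊤)
    (hv : ∀ x : R, x ≠ 0 → ∃ n : ℕ, v x = n ∧ π ^ n ∣ x ∧ ¬ π ^ (n + 1) ∣ x)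
    (ζ : R) (hζ : IsPrimitiveRoot ζ (p ^ 2))
    (μ lam : R) (hμ0 : μ ≠ 0) (hlam0 : lam ≠ 0)
    (h1 : v μ ≤ v (ζ ^ p - 1)) (h2 : v lam ≤ v μ)
    (c : R) (hc : c * μ ^ (p - 1) = (p : R)) :
    ∀ a : R,
      (lam ∣ a ^ p ∧ lam ^ p ∣ ((p : R) * a - c * a ^ p)) ↔
        max ((p : ℕ∞) * v lam + ((p - 1 : ℕ) : ℕ∞) * v μ - v (p : R)) (v lam) ≤
          (p : ℕ∞) * v a :=
  stmt_10_general p hp2 R v π hπ hv0 hv μ lam hμ0 h2 c hc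
end

section
/- Assume p > 2 and that R contains a primitive p²-th root of unity ζ; set λ_{(1)} := ζ^p − 1. Let μ, λ ∈ R be nonzero with v(λ_{(1)}) ≥ v(μ) ≥ v(λ), and let c ∈ R be the element with c·μ^{p−1} = p. Then the implication 'for all a ∈ R: if λ divides a^p and λ^p divides p·a − c·a^p, then λ divides a' holds if and only if v(λ) ≤ 1 or v(p) − (p−1)·v(μ) < p. -/
/-!
The hypotheses on `v` force it to be the valuation `w = addVal R`, and `c μ^(p-1) = p` gives
`w c = v(p) - (p-1) v(μ)`. For `a` with `w a < w λ ≤ w μ`, the term `c a^p` has strictly smaller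
valuation than `p a = c μ^(p-1) a`, so `λ^p ∣ p a - c a^p` means `p w λ ≤ w c + p w a`. If
`w c < p` this contradicts `w a < w λ`, and if `w λ ≤ 1` already `λ ∣ a^p` forces `w a ≥ w λ`.
Otherwise `a = π^(w λ - 1)` is a counterexample.
-/

open IsDiscreteValuationRing

namespace IsDiscreteValuationRing

variable {R : Type*} [CommRing R] [IsDomain R] [IsDiscreteValuationRing R]

theorem addVal_eq_of_pow_dvd_of_not_pow_succ_dvd_s11 {π x : R} (hπ : Irreducible π) {n : ℕ}
    (h : π ^ n ∣ x) (h' : ¬ π ^ (n + 1) ∣ x) : addVal R x = n := by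
  rw [← addVal_le_iff_dvd, hπ.addVal_pow] at h h'
  push_cast at h'
  rw [ENat.add_one_le_iff (ENat.natCast_ne_top n), not_lt] at h'
  exact le_antisymm h' h

theorem eq_addVal {v : R → ℕ∞} {π : R} (hπ : Irreducible π) (hv0 : v 0 = ⊤)
    (hv : ∀ x : R, x ≠ 0 → ∃ n : ℕ, v x = n ∧ π ^ n ∣ x ∧ ¬ π ^ (n + 1) ∣ x) :
    v = addVal R := by
  funext x
  rcases eq_or_ne x 0 with rfl | hx
  · rw [hv0, addVal_zero]
  · obtain ⟨n, hn, hdvd, hndvd⟩ := hv x hx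
    rw [hn, addVal_eq_of_pow_dvd_of_not_pow_succ_dvd_s11 hπ hdvd hndvd]

variable {p : ℕ} {lam μ c : R}

theorem addVal_mul_pow_lt_addVal_mul_pow_mul (hp : 2 ≤ p) (hc : addVal R c ≠ ⊤) {a : R}
    (haμ : addVal R a < addVal R μ) :
    addVal R (c * a ^ p) < addVal R (c * μ ^ (p - 1) * a) := by
  obtain ⟨α, hα⟩ := ENat.ne_top_iff_exists.mp (ne_top_of_lt haμ)
  obtain ⟨γ, hγ⟩ := ENat.ne_top_iff_exists.mp hc
  have hαμ : ((α + 1 : ℕ) : ℕ∞) ≤ addVal R μ := by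
    rw [← hα] at haμ
    exact Order.add_one_le_of_lt haμ
  simp only [addVal_mul, addVal_pow, nsmul_eq_mul, ← hα, ← hγ]
  calc ((γ + p * α : ℕ) : ℕ∞) < ((γ + (p - 1) * (α + 1) + α : ℕ) : ℕ∞) := by
        norm_cast
        zify [(by omega : 1 ≤ p)]
        nlinarith
    _ ≤ γ + (p - 1 : ℕ) * addVal R μ + α := by
        push_cast at hαμ ⊢
        gcongr

theorem dvd_of_dvd_pow_of_pow_dvd_sub (hp : 2 ≤ p) (hlamμ : addVal R lam ≤ addVal R μ)
    (hcrit : addVal R lam ≤ 1 ∨ addVal R c < p) {a : R} (hpow : lam ∣ a ^ p)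
    (hsub : lam ^ p ∣ c * μ ^ (p - 1) * a - c * a ^ p) : lam ∣ a := by
  by_contra hna
  rw [← addVal_le_iff_dvd, not_le] at hna
  rw [← addVal_le_iff_dvd, addVal_pow, nsmul_eq_mul] at hpow
  rcases hcrit with hlam1 | hc
  · have ha0 : addVal R a = 0 := Order.lt_one_iff.mp (hna.trans_le hlam1)
    rw [ha0, mul_zero] at hpow
    exact not_lt_zero (hna.trans_le hpow)
  have hlt := addVal_mul_pow_lt_addVal_mul_pow_mul hp (ne_top_of_lt hc) (hna.trans_le hlamμ)
  rw [← addVal_le_iff_dvd, AddValuation.map_sub_eq_of_lt_right _ hlt, addVal_pow, addVal_mul,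
    addVal_pow, nsmul_eq_mul, nsmul_eq_mul] at hsub
  refine lt_irrefl ((p : ℕ∞) * addVal R lam) ?_
  calc (p : ℕ∞) * addVal R lam ≤ addVal R c + p * addVal R a := hsub
    _ < p + p * addVal R a := WithTop.add_lt_add_right
      (WithTop.mul_ne_top (ENat.natCast_ne_top p) (ne_top_of_lt hna)) hc
    _ = p * (addVal R a + 1) := by ring
    _ ≤ p * addVal R lam := by gcongr; exact Order.add_one_le_of_lt hna

theorem exists_dvd_pow_and_pow_dvd_sub_and_not_dvd (hp : 2 ≤ p) (hlam : lam ≠ 0)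
    (hlamμ : addVal R lam ≤ addVal R μ) (hlam1 : 1 < addVal R lam) (hc : p ≤ addVal R c) :
    ∃ a, lam ∣ a ^ p ∧ lam ^ p ∣ c * μ ^ (p - 1) * a - c * a ^ p ∧ ¬ lam ∣ a := by
  obtain ⟨π, hπ⟩ := exists_irreducible R
  obtain ⟨m, hm⟩ := ENat.ne_top_iff_exists.mp (mt addVal_eq_top_iff.mp hlam)
  rw [← hm] at hlam1 hlamμ
  norm_cast at hlam1
  obtain ⟨k, rfl⟩ : ∃ k, m = k + 1 := ⟨m - 1, by omega⟩
  refine ⟨π ^ k, ?_, dvd_sub ?_ ?_, ?_⟩ <;>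
    simp only [← addVal_le_iff_dvd, addVal_mul, addVal_pow, hπ.addVal_pow, ← hm, nsmul_eq_mul]
  · norm_cast
    nlinarith
  · calc ((p * (k + 1) : ℕ) : ℕ∞) ≤ ((p + (p - 1) * (k + 1) + k : ℕ) : ℕ∞) := by
          norm_cast
          zify [(by omega : 1 ≤ p)]
          nlinarith
      _ ≤ addVal R c + (p - 1 : ℕ) * addVal R μ + k := by
          push_cast at hlamμ ⊢
          gcongr
  · calc ((p * (k + 1) : ℕ) : ℕ∞) = p + (p * k : ℕ) := by push_cast; ring
      _ ≤ addVal R c + p * k := by push_cast; gcongr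
  · norm_cast
    omega

theorem forall_dvd_of_dvd_pow_of_pow_dvd_sub_iff (hp : 2 ≤ p) (hlam : lam ≠ 0)
    (hlamμ : addVal R lam ≤ addVal R μ) :
    (∀ a : R, lam ∣ a ^ p ∧ lam ^ p ∣ c * μ ^ (p - 1) * a - c * a ^ p → lam ∣ a) ↔
      addVal R lam ≤ 1 ∨ addVal R c < p := by
  refine ⟨fun h => ?_, fun hcrit a ⟨hpow, hsub⟩ =>
    dvd_of_dvd_pow_of_pow_dvd_sub hp hlamμ hcrit hpow hsub⟩
  by_contra! hcrit
  obtain ⟨a, hpow, hsub, hna⟩ :=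
    exists_dvd_pow_and_pow_dvd_sub_and_not_dvd hp hlam hlamμ hcrit.1 hcrit.2
  exact hna (h a ⟨hpow, hsub⟩)

end IsDiscreteValuationRing

theorem stmt_11_general (p : ℕ) (hp : p.Prime)
    (R : Type*) [CommRing R] [IsDomain R] [IsDiscreteValuationRing R]
    (v : R → ℕ∞) (π : R) (hπ : Irreducible π) (hv0 : v 0 = ⊤)
    (hv : ∀ x : R, x ≠ 0 → ∃ n : ℕ, v x = n ∧ π ^ n ∣ x ∧ ¬ π ^ (n + 1) ∣ x)
    (μ lam : R) (hμ0 : μ ≠ 0) (hlam0 : lam ≠ 0)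
    (h2 : v lam ≤ v μ)
    (c : R) (hc : c * μ ^ (p - 1) = (p : R)) :
    (∀ a : R, lam ∣ a ^ p ∧ lam ^ p ∣ ((p : R) * a - c * a ^ p) → lam ∣ a) ↔
      (v lam ≤ 1 ∨ v (p : R) - ((p - 1 : ℕ) : ℕ∞) * v μ < (p : ℕ∞)) := by
  obtain rfl := eq_addVal hπ hv0 hv
  have hμ : ((p - 1 : ℕ) : ℕ∞) * addVal R μ ≠ ⊤ :=
    WithTop.mul_ne_top (ENat.natCast_ne_top _) (mt addVal_eq_top_iff.mp hμ0)
  have hvc : addVal R (p : R) - ((p - 1 : ℕ) : ℕ∞) * addVal R μ = addVal R c := by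
    rw [← hc, addVal_mul, addVal_pow, nsmul_eq_mul,
      (ENat.addLECancellable_of_ne_top hμ).add_tsub_cancel_right]
  rw [hvc, ← hc]
  exact forall_dvd_of_dvd_pow_of_pow_dvd_sub_iff hp.two_le hlam0 h2

/-- With `p > 2`, `ζ` a primitive `p²`-th root of unity, `λ₁ := ζ^p - 1`,
`μ, λ` nonzero with `v(λ₁) ≥ v(μ) ≥ v(λ)`, and `c·μ^{p-1} = p`: the implication
"for all `a`: `λ ∣ a^p` and `λ^p ∣ p·a - c·a^p` imply `λ ∣ a`" holds iff
`v(λ) ≤ 1` or `v(p) - (p-1)·v(μ) < p`. -/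
theorem stmt_11 (p : ℕ) (hp : p.Prime) (hp2 : 2 < p)
    (R : Type*) [CommRing R] [IsDomain R] [IsDiscreteValuationRing R] [CharZero R]
    [CharP (IsLocalRing.ResidueField R) p]
    (v : R → ℕ∞) (π : R) (hπ : Irreducible π) (hv0 : v 0 = ⊤)
    (hv : ∀ x : R, x ≠ 0 → ∃ n : ℕ, v x = n ∧ π ^ n ∣ x ∧ ¬ π ^ (n + 1) ∣ x)
    (ζ : R) (hζ : IsPrimitiveRoot ζ (p ^ 2))
    (μ lam : R) (hμ0 : μ ≠ 0) (hlam0 : lam ≠ 0)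
    (h1 : v μ ≤ v (ζ ^ p - 1)) (h2 : v lam ≤ v μ)
    (c : R) (hc : c * μ ^ (p - 1) = (p : R)) :
    (∀ a : R, lam ∣ a ^ p ∧ lam ^ p ∣ ((p : R) * a - c * a ^ p) → lam ∣ a) ↔
      (v lam ≤ 1 ∨ v (p : R) - ((p - 1 : ℕ) : ℕ∞) * v μ < (p : ℕ∞)) :=
  stmt_11_general p hp R v π hπ hv0 hv μ lam hμ0 hlam0 h2 c hc
end

section
/- Assume p > 2 and that R contains a primitive p²-th root of unity ζ; set λ_{(2)} := ζ − 1 and λ_{(1)} := ζ^p − 1. Let η := Σ_{k=1}^{p−1} (−1)^{k−1}·k^{−1}·λ_{(2)}^k ∈ R (each integer k with 1 ≤ k ≤ p−1 is a unit in R), and let c ∈ R be the element with c·λ_{(1)}^{p−1} = p (it exists since v(p) = (p−1)·v(λ_{(1)})). Then λ_{(1)}^p divides p·η − λ_{(1)} − c·η^p in R. -/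
/-!
Write `x = ζ - 1`, `L = ζ ^ p - 1` and `w = truncLogDiv p x`, so that `η = x w`. Since
`C(p, k) / p ≡ (-1) ^ (k - 1) / k (mod p)`, the binomial theorem gives
`(1 + y) ^ p ≡ 1 + y ^ p + p y truncLogDiv p y (mod p² y)`.

At `y = x` this reads `L = x ^ p + p x (…)`; as `L ^ (p - 1) ∣ p`, bootstrapping shows
`x ^ p ∣ p`, so `L` is associated to `x ^ p`. At `y = L`, where `(1 + L) ^ p = 1`, substituting
`p = c L ^ (p - 1)` and cancelling `L ^ p` gives `p ∣ 1 + c truncLogDiv p L`, and by Frobenius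
`w ^ p ≡ truncLogDiv p (x ^ p) ≡ truncLogDiv p L (mod p)`; so `p ∣ 1 + c w ^ p`. Hence, with
`p² x ρ` the remainder at `y = x`, `p η - L - c η ^ p = -x ^ p (1 + c w ^ p) - p² x ρ` is
divisible by `L ^ p ~ x ^ p L ^ (p - 1)`.
-/

open Finset IsLocalRing

-- `x * truncLogDiv p x` is the truncated logarithm `∑_{0<k<p} (-1)^(k-1) x^k / k`.
noncomputable def truncLogDiv {R : Type*} [CommRing R] (p : ℕ) (x : R) : R :=
  ∑ k ∈ Icc 1 (p - 1), (-1 : R) ^ (k - 1) * Ring.inverse (k : R) * x ^ (k - 1)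

theorem Nat.Prime.natCast_choose_sub_one_eq_neg_one_pow {p : ℕ} (hp : p.Prime) {j : ℕ}
    (hj : j < p) :
    (((p - 1).choose j : ℕ) : ZMod p) = (-1) ^ j := by
  have := Fact.mk hp
  induction j with
  | zero => simp
  | succ j ih =>
    have hpascal : (p - 1).choose j + (p - 1).choose (j + 1) = p.choose (j + 1) := by
      conv_rhs => rw [← Nat.sub_add_cancel hp.one_le]
      rw [Nat.choose_succ_succ']
    have hzero : ((p.choose (j + 1) : ℕ) : ZMod p) = 0 :=
      (ZMod.natCast_eq_zero_iff _ _).2 (hp.dvd_choose_self j.succ_ne_zero hj)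
    rw [← hpascal, Nat.cast_add, ih (by omega)] at hzero
    linear_combination hzero

theorem RingHom.map_ringInverse {R S : Type*} [CommRing R] [CommRing S] (f : R →+* S) {a : R}
    (ha : IsUnit a) : f (Ring.inverse a) = Ring.inverse (f a) := by
  obtain ⟨u, rfl⟩ := ha
  rw [Ring.inverse_unit]
  exact (Ring.inverse_unit (Units.map f.toMonoidHom u)).symm

section truncLogDiv

variable {R : Type*} [CommRing R]

theorem mul_truncLogDiv (p : ℕ) (x : R) :
    x * truncLogDiv p x =
      ∑ k ∈ Icc 1 (p - 1), (-1 : R) ^ (k - 1) * Ring.inverse (k : R) * x ^ k := by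
  rw [truncLogDiv, mul_sum]
  refine sum_congr rfl fun k hk => ?_
  obtain ⟨j, rfl⟩ : ∃ j, k = j + 1 := ⟨k - 1, by grind⟩
  rw [Nat.add_sub_cancel, pow_succ']
  ring

theorem sub_dvd_truncLogDiv_sub (p : ℕ) (a b : R) :
    a - b ∣ truncLogDiv p a - truncLogDiv p b := by
  rw [truncLogDiv, truncLogDiv, ← sum_sub_distrib]
  exact dvd_sum fun k _ => by rw [← mul_sub]; exact (sub_dvd_pow_sub_pow a b _).mul_left _

theorem truncLogDiv_pow_char (p : ℕ) [Fact p.Prime] [CharP R p] (y : R) :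
    truncLogDiv p y ^ p = truncLogDiv p (y ^ p) := by
  have natCast_pow (k : ℕ) : (k : R) ^ p = k := by
    rw [← map_natCast (ZMod.castHom (dvd_refl p) R), ← map_pow, ZMod.pow_card]
  rw [truncLogDiv, sum_pow_char]
  refine sum_congr rfl fun k _ => ?_
  rw [mul_pow, mul_pow, pow_right_comm, neg_one_pow_char, Ring.inverse_pow, natCast_pow,
    pow_right_comm]

end truncLogDiv

section LocalRing

variable {R : Type*} [CommRing R] [IsLocalRing R]

theorem associated_pow_of_eq_pow_add {x L q y : R} {n : ℕ} (hn : 1 < n)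
    (hx : x ∈ maximalIdeal R) (hq : L ^ (n - 1) ∣ q) (hL : L = x ^ n + x * q * y) :
    Associated (x ^ n) L := by
  have hxL : x ∣ L :=
    hL ▸ dvd_add (dvd_pow_self x (by omega)) (dvd_mul_of_dvd_left (dvd_mul_right x q) y)
  have hxq : x ^ (n - 1) ∣ q := (pow_dvd_pow_of_dvd hxL _).trans hq
  have hxnL : x ^ n ∣ L := by
    refine hL ▸ dvd_add dvd_rfl (dvd_mul_of_dvd_left ?_ y)
    rw [← Nat.sub_add_cancel hn.le, pow_succ']
    exact mul_dvd_mul_left x hxq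
  obtain ⟨t, rfl⟩ : x ^ n ∣ q := hxnL.trans ((dvd_pow_self L (by omega)).trans hq)
  have hunit : IsUnit (1 + x * t * y) := by
    rw [← sub_neg_eq_add]
    refine isUnit_one_sub_self_of_mem_nonunits _ ?_
    rw [← mem_maximalIdeal, neg_mem_iff, mul_assoc]
    exact Ideal.mul_mem_right _ _ hx
  convert associated_mul_unit_right _ _ hunit using 1
  rw [hL]
  ring

variable {p : ℕ} [CharP (ResidueField R) p]

theorem isUnit_natCast_of_lt {k : ℕ} (hk0 : 0 < k) (hkp : k < p) : IsUnit (k : R) := by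
  rw [← notMem_maximalIdeal, ← residue_eq_zero_iff, map_natCast, CharP.cast_eq_zero_iff _ p]
  exact Nat.not_dvd_of_pos_of_lt hk0 hkp

theorem sub_one_mem_maximalIdeal_of_pow_eq_one (hp : p.Prime) {ζ : R} {n : ℕ}
    (hζ : ζ ^ p ^ n = 1) : ζ - 1 ∈ maximalIdeal R := by
  have : ExpChar (ResidueField R) p := ExpChar.prime hp
  rw [← residue_eq_zero_iff]
  refine pow_eq_zero_iff (pow_ne_zero n hp.ne_zero) |>.1 ?_
  rw [map_sub, map_one, sub_pow_expChar_pow, ← map_pow, hζ, map_one, one_pow, sub_self]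

theorem map_truncLogDiv {S : Type*} [CommRing S] (f : R →+* S) (x : R) :
    f (truncLogDiv p x) = truncLogDiv p (f x) := by
  simp only [truncLogDiv, map_sum, map_mul, map_pow, map_neg, map_one]
  refine sum_congr rfl fun k hk => ?_
  rw [f.map_ringInverse (isUnit_natCast_of_lt (by grind) (by grind)), map_natCast]

theorem natCast_dvd_choose_div_sub (hp : p.Prime) {k : ℕ} (hk0 : 0 < k) (hkp : k < p) :
    (p : R) ∣ ((p.choose k / p : ℕ) : R) - (-1) ^ (k - 1) * Ring.inverse (k : R) := by
  have hku : IsUnit (k : R) := isUnit_natCast_of_lt hk0 hkp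
  have hmul : k * (p.choose k / p) = (p - 1).choose (k - 1) := by
    have h := Nat.add_one_mul_choose_eq (p - 1) (k - 1)
    rw [Nat.sub_add_cancel hp.one_le, Nat.sub_add_cancel hk0] at h
    rw [← Nat.mul_div_assoc _ (hp.dvd_choose_self hk0.ne' hkp), mul_comm, ← h,
      Nat.mul_div_cancel_left _ hp.pos]
  have hcong : (p : ℤ) ∣ (p - 1).choose (k - 1) - (-1) ^ (k - 1) := by
    rw [← ZMod.intCast_zmod_eq_zero_iff_dvd]
    push_cast
    rw [hp.natCast_choose_sub_one_eq_neg_one_pow (by omega), sub_self]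
  rw [← hku.dvd_mul_left, mul_sub, ← mul_assoc, mul_right_comm, Ring.mul_inverse_cancel _ hku,
    one_mul, ← Nat.cast_mul, hmul]
  simpa using map_dvd (Int.castRingHom R) hcong

theorem sq_mul_dvd_one_add_pow_sub (hp : p.Prime) (x : R) :
    (p : R) ^ 2 * x ∣ (1 + x) ^ p - 1 - x ^ p - p * (x * truncLogDiv p x) := by
  have hexpand : (1 + x) ^ p - 1 - x ^ p - p * (x * truncLogDiv p x) = p * ∑ k ∈ Icc 1 (p - 1),
      x ^ k * (((p.choose k / p : ℕ) : R) - (-1) ^ (k - 1) * Ring.inverse (k : R)) := by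
    rw [add_comm 1 x, add_pow_prime_eq' hp, mul_truncLogDiv, show Ioo 0 p = Icc 1 (p - 1) from rfl]
    simp only [one_pow, mul_one, mul_sub, sum_sub_distrib]
    ring_nf
  rw [hexpand, sq, mul_assoc]
  refine mul_dvd_mul_left _ (dvd_sum fun k hk => ?_)
  rw [mul_comm (p : R)]
  exact mul_dvd_mul (dvd_pow_self x (by grind))
    (natCast_dvd_choose_div_sub hp (by grind) (by grind))

theorem natCast_dvd_truncLogDiv_pow_sub (hp : p.Prime) (x : R) :
    (p : R) ∣ truncLogDiv p x ^ p - truncLogDiv p (x ^ p) := by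
  have := Fact.mk hp
  have hp_mem : (p : R) ∈ nonunits R := by
    rw [← mem_maximalIdeal, ← residue_eq_zero_iff, map_natCast]
    exact CharP.cast_eq_zero _ p
  have := CharP.quotient R p hp_mem
  rw [← Ideal.Quotient.eq_zero_iff_dvd, map_sub, map_pow, map_truncLogDiv, map_truncLogDiv,
    map_pow, truncLogDiv_pow_char, sub_self]

theorem natCast_dvd_one_add_mul_truncLogDiv [IsDomain R] (hp : p.Prime) {L c : R} (hL0 : L ≠ 0)
    (hL : (1 + L) ^ p = 1) (hc : c * L ^ (p - 1) = p) : (p : R) ∣ 1 + c * truncLogDiv p L := by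
  obtain ⟨ρ, hρ⟩ := sq_mul_dvd_one_add_pow_sub hp L
  rw [hL] at hρ
  have hLp : L ^ p = L ^ (p - 1) * L := by rw [← pow_succ, Nat.sub_add_cancel hp.one_le]
  have hzero : L ^ p * (1 + c * truncLogDiv p L + p * c * ρ) = 0 := by
    linear_combination -hρ + (L * truncLogDiv p L + p * L * ρ) * hc
      + (c * truncLogDiv p L + c * p * ρ) * hLp
  have := (mul_eq_zero.1 hzero).resolve_left (pow_ne_zero p hL0)
  exact ⟨-(c * ρ), by linear_combination this⟩

end LocalRing

theorem stmt_12_general (p : ℕ) (hp : p.Prime)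
    (R : Type*) [CommRing R] [IsDomain R] [IsDiscreteValuationRing R]
    [CharP (IsLocalRing.ResidueField R) p]
    (ζ : R) (hζ : IsPrimitiveRoot ζ (p ^ 2))
    (η : R)
    (hη : η = ∑ k ∈ Finset.Icc 1 (p - 1),
        (-1 : R) ^ (k - 1) * Ring.inverse (k : R) * (ζ - 1) ^ k)
    (c : R) (hc : c * (ζ ^ p - 1) ^ (p - 1) = (p : R)) :
    (ζ ^ p - 1) ^ p ∣ (p : R) * η - (ζ ^ p - 1) - c * η ^ p := by
  set x := ζ - 1
  set L := ζ ^ p - 1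
  set w := truncLogDiv p x
  have hηw : η = x * w := by rw [hη, mul_truncLogDiv]
  have hLp : L ^ (p - 1) ∣ p := Dvd.intro_left c hc
  have hLp' : L ∣ p := (dvd_pow_self L (Nat.sub_ne_zero_of_lt hp.one_lt)).trans hLp
  obtain ⟨ρ, hρ⟩ := sq_mul_dvd_one_add_pow_sub hp x
  have hLx : L = x ^ p + x * p * (w + p * ρ) := by
    rw [show 1 + x = ζ by ring] at hρ
    linear_combination hρ
  have hassoc : Associated (x ^ p) L := associated_pow_of_eq_pow_add hp.one_lt
    (sub_one_mem_maximalIdeal_of_pow_eq_one hp hζ.pow_eq_one) hLp hLx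
  have hw : (p : R) ∣ 1 + c * w ^ p := by
    have hL0 : L ≠ 0 := sub_ne_zero.2 <| hζ.pow_ne_one_of_pos_of_lt hp.ne_zero <| by
      nlinarith [hp.two_le]
    have hL1 : (1 + L) ^ p = 1 := by rw [add_sub_cancel, ← pow_mul, ← sq, hζ.pow_eq_one]
    have hxL : (p : R) ∣ x ^ p - L := ⟨-(x * (w + p * ρ)), by rw [hLx]; ring⟩
    have hwL : (p : R) ∣ w ^ p - truncLogDiv p L := by
      rw [← sub_add_sub_cancel _ (truncLogDiv p (x ^ p))]
      exact dvd_add (natCast_dvd_truncLogDiv_pow_sub hp x)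
        (hxL.trans (sub_dvd_truncLogDiv_sub p _ _))
    convert dvd_add (hwL.mul_left c) (natCast_dvd_one_add_mul_truncLogDiv hp hL0 hL1 hc) using 1
    ring
  have hsplit : (p : R) * η - L - c * η ^ p = -(x ^ p * (1 + c * w ^ p)) - p * p * (x * ρ) := by
    rw [hηw, mul_pow, hLx]
    ring
  have hLpow : L ^ p = L * L ^ (p - 1) := by rw [← pow_succ', Nat.sub_add_cancel hp.one_le]
  rw [hsplit, hLpow]
  exact dvd_sub (dvd_neg.2 (mul_dvd_mul hassoc.symm.dvd (hLp.trans hw)))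
    ((mul_dvd_mul hLp' hLp).mul_right _)

/-- With `p > 2`, `ζ` a primitive `p²`-th root of unity, `λ₂ := ζ - 1`,
`λ₁ := ζ^p - 1`, `η := Σ_{k=1}^{p-1} (-1)^{k-1}·k⁻¹·λ₂^k`, and `c·λ₁^{p-1} = p`:
`λ₁^p` divides `p·η - λ₁ - c·η^p` in `R`. -/
theorem stmt_12 (p : ℕ) (hp : p.Prime) (hp2 : 2 < p)
    (R : Type*) [CommRing R] [IsDomain R] [IsDiscreteValuationRing R] [CharZero R]
    [CharP (IsLocalRing.ResidueField R) p]
    (ζ : R) (hζ : IsPrimitiveRoot ζ (p ^ 2))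
    (η : R)
    (hη : η = ∑ k ∈ Finset.Icc 1 (p - 1),
        (-1 : R) ^ (k - 1) * Ring.inverse (k : R) * (ζ - 1) ^ k)
    (c : R) (hc : c * (ζ ^ p - 1) ^ (p - 1) = (p : R)) :
    (ζ ^ p - 1) ^ p ∣ (p : R) * η - (ζ ^ p - 1) - c * η ^ p :=
  stmt_12_general p hp R ζ hζ η hη c hc
end
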